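/- arXiv:1911.08820 — 2 statements merged into one kernel-verified Lean document; each statement's English description precedes it below -/
import Mathlib

section
/- For the logistic second derivative h(y) = 4ψ(y)(1−ψ(y)) with ψ(y) = e^y/(e^y+e^{-y}), the smoothness ratio bound h(ξ)/h(y) ≤ e^{2|ξ−y|} holds for all real ξ, y. -/
/-! Since `hss = 1 / cosh ^ 2`, the bound says `cosh y ≤ cosh ξ * exp |ξ - y|`, which holds
termwise for the two exponentials in `cosh`. -/

open Real

noncomputable def ψ (y : ℝ) : ℝ := Real.exp y / (Real.exp y + Real.exp (-y))

noncomputable def hss (y : ℝ) : ℝ := 4 * ψ y * (1 - ψ y)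

lemma cosh_le_cosh_mul_exp_abs_sub (a b : ℝ) : cosh a ≤ cosh b * exp |a - b| := by
  have h_pos : exp a ≤ exp b * exp |a - b| := by
    rw [← exp_add]
    exact exp_le_exp.2 (by linarith [le_abs_self (a - b)])
  have h_neg : exp (-a) ≤ exp (-b) * exp |a - b| := by
    rw [← exp_add]
    exact exp_le_exp.2 (by linarith [neg_abs_le (a - b)])
  rw [cosh_eq, cosh_eq]
  linarith

lemma hss_eq_inv_cosh_sq (y : ℝ) : hss y = (cosh y ^ 2)⁻¹ := by
  have h_exp_mul : exp y * exp (-y) = 1 := by rw [← exp_add, add_neg_cancel, exp_zero]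
  rw [hss, ψ, cosh_eq]
  field_simp
  linear_combination 4 * h_exp_mul

theorem stmt_5 (ξ y : ℝ) : hss ξ / hss y ≤ Real.exp (2 * |ξ - y|) := by
  have h_cosh : cosh y ^ 2 ≤ (cosh ξ * exp |ξ - y|) ^ 2 := by
    gcongr
    rw [abs_sub_comm]
    exact cosh_le_cosh_mul_exp_abs_sub y ξ
  have h_exp_sq : exp (2 * |ξ - y|) = exp |ξ - y| ^ 2 := by exact_mod_cast exp_nat_mul _ 2
  rw [hss_eq_inv_cosh_sq, hss_eq_inv_cosh_sq, inv_div_inv, div_le_iff₀ (by positivity), h_exp_sq]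
  linarith
end

section
/- For the logistic loss ℓ(y) = −r·ln ψ(y) − (1−r)·ln(1−ψ(y)) with r ∈ {0,1} and ψ(y) = e^y/(e^y+e^{-y}), the inequality ℓ'(y)²/ℓ''(y) ≥ ℓ(y) holds for all real y. -/
noncomputable def logloss (r : ℝ) (y : ℝ) : ℝ :=
  -r * Real.log (ψ y) - (1 - r) * Real.log (1 - ψ y)

/-!
Since `ℓ'(y)² / ℓ''(y) = (r - ψ)² / (ψ (1 - ψ))`, for either label the inequality reads
`(1 - x) / x ≥ -log x`, where `x ∈ (0, 1)` is the probability assigned to the correct label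
(`x = ψ y` if `r = 1`, `x = 1 - ψ y` if `r = 0`). This is `log (1 / x) ≤ 1 / x - 1`.
-/

open Real

lemma neg_log_le_one_sub_div {x : ℝ} (hx : 0 < x) : -log x ≤ (1 - x) / x := by
  have h := one_sub_inv_le_log_of_pos hx
  rw [sub_div, div_self hx.ne', one_div]
  linarith

lemma ψ_pos (y : ℝ) : 0 < ψ y := by
  unfold ψ; positivity

lemma ψ_lt_one (y : ℝ) : ψ y < 1 := by
  rw [ψ, div_lt_one (by positivity)]
  linarith [exp_pos (-y)]

theorem stmt_7 (r : ℝ) (hr : r = 0 ∨ r = 1) (y : ℝ) :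
    (2 * (ψ y - r)) ^ 2 / (4 * ψ y * (1 - ψ y)) ≥ logloss r y := by
  have hp : 0 < ψ y := ψ_pos y
  have hq : 0 < 1 - ψ y := sub_pos.mpr (ψ_lt_one y)
  rcases hr with rfl | rfl
  · calc logloss 0 y = -log (1 - ψ y) := by simp [logloss]
      _ ≤ (1 - (1 - ψ y)) / (1 - ψ y) := neg_log_le_one_sub_div hq
      _ = (2 * (ψ y - 0)) ^ 2 / (4 * ψ y * (1 - ψ y)) := by field_simp; ring
  · calc logloss 1 y = -log (ψ y) := by simp [logloss]
      _ ≤ (1 - ψ y) / ψ y := neg_log_le_one_sub_div hp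
      _ = (2 * (ψ y - 1)) ^ 2 / (4 * ψ y * (1 - ψ y)) := by field_simp; ring
end
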